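/- arXiv:2401.09801 — 2 statements merged into one kernel-verified Lean document; each statement's English description precedes it below -/
import Mathlib

section
/- Let Ω ⊂ ℝ^d be a bounded open set with C² boundary and let u be a C¹ vector field on Ω̄ with u = 0 on ∂Ω and div u = 0 in Ω. Then the vector field (∇u)ν is tangential to ∂Ω at every boundary point. -/
open Filter Topology

/-- If `Ω ⊆ ℝ^d` is a bounded open set with `C²` boundary (described by a `C²` defining
function `ρ`, with outward unit normal `ν = ∇ρ/‖∇ρ‖`), and `u` is a `C¹` vector field
vanishing on `∂Ω` and divergence-free in `Ω`, then `⟨(∇u)ν, ν⟩ = 0` at every boundary point. -/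
theorem jacobian_normal_is_tangential {d : ℕ}
    (Ω : Set (EuclideanSpace ℝ (Fin d)))
    (hΩopen : IsOpen Ω) (hΩbdd : Bornology.IsBounded Ω)
    (ρ : EuclideanSpace ℝ (Fin d) → ℝ) (hρ : ContDiff ℝ 2 ρ)
    (hΩρ : Ω = {x | ρ x < 0}) (hfr : frontier Ω = {x | ρ x = 0})
    (hgrad : ∀ x ∈ frontier Ω, gradient ρ x ≠ 0)
    (u : EuclideanSpace ℝ (Fin d) → EuclideanSpace ℝ (Fin d))
    (hu : ContDiff ℝ 1 u)
    (hu0 : ∀ x ∈ frontier Ω, u x = 0)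
    (hdiv : ∀ x ∈ Ω, ∑ i, fderiv ℝ u x (EuclideanSpace.single i 1) i = 0)
    (x : EuclideanSpace ℝ (Fin d)) (hx : x ∈ frontier Ω) :
    (inner ℝ (fderiv ℝ u x (‖gradient ρ x‖⁻¹ • gradient ρ x))
      (‖gradient ρ x‖⁻¹ • gradient ρ x) : ℝ) = 0 := by
  set g := gradient ρ x with hgdef
  set A := fderiv ℝ u x with hAdef
  have hgne : g ≠ 0 := hgrad x hx
  have hgnorm : ‖g‖ ≠ 0 := norm_ne_zero_iff.mpr hgne
  have hρdiff : DifferentiableAt ℝ ρ x := (hρ.differentiable (by norm_num)).differentiableAt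
  -- the Fréchet derivative of ρ is given by inner product with the gradient
  have hfd : ∀ v, fderiv ℝ ρ x v = (inner ℝ g v : ℝ) := by
    intro v
    rw [hgdef, gradient, ← InnerProductSpace.toDual_apply_apply,
      LinearIsometryEquiv.apply_symm_apply]
  have hf : HasStrictFDerivAt ρ (fderiv ℝ ρ x) x :=
    (hρ.contDiffAt).hasStrictFDerivAt (by norm_num)
  have hf' : (fderiv ℝ ρ x).range = ⊤ := by
    rw [LinearMap.range_eq_top]
    intro c
    refine ⟨(c / ‖g‖ ^ 2) • g, ?_⟩
    rw [map_smul, ContinuousLinearMap.coe_coe, hfd, real_inner_self_eq_norm_sq]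
    exact div_mul_cancel₀ c (pow_ne_zero 2 hgnorm)
  -- tangential derivatives of u vanish
  have ht : ∀ v, (inner ℝ g v : ℝ) = 0 → A v = 0 := by
    intro v hv
    have hvk : v ∈ (fderiv ℝ ρ x).ker := by
      rw [LinearMap.mem_ker, ContinuousLinearMap.coe_coe, hfd]; exact hv
    set φ := hf.implicitFunction ρ (fderiv ℝ ρ x) hf' (ρ x) with hφdef
    have hφ0 : φ 0 = x := hf.implicitFunction_apply_image hf'
    have hφd : HasStrictFDerivAt φ ((fderiv ℝ ρ x).ker).subtypeL 0 :=
      hf.to_implicitFunction hf'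
    have hρx0 : ρ x = 0 := by rw [hfr] at hx; exact hx
    have hev : ∀ᶠ z : ((fderiv ℝ ρ x).ker) in 𝓝 0, ρ (φ z) = ρ x := by
      have h1 := hf.map_implicitFunction_eq hf'
      have h2 : Filter.Tendsto (fun z : ((fderiv ℝ ρ x).ker) => ((ρ x : ℝ), z))
          (𝓝 0) (𝓝 (ρ x, 0)) := by
        rw [nhds_prod_eq]
        exact tendsto_const_nhds.prodMk tendsto_id
      exact h2.eventually h1
    have hev0 : (u ∘ φ) =ᶠ[𝓝 0] (fun _ => (0 : EuclideanSpace ℝ (Fin d))) := by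
      filter_upwards [hev] with z hz
      apply hu0
      rw [hfr]
      show ρ (φ z) = 0
      rw [hz, hρx0]
    have hcomp : HasFDerivAt (u ∘ φ) (A.comp ((fderiv ℝ ρ x).ker).subtypeL) 0 := by
      have h1 : HasFDerivAt u A (φ 0) := by
        rw [hφ0]; exact (hu.differentiable one_ne_zero x).hasFDerivAt
      exact h1.comp 0 hφd.hasFDerivAt
    have hzero : HasFDerivAt (u ∘ φ)
        (0 : ((fderiv ℝ ρ x).ker) →L[ℝ] EuclideanSpace ℝ (Fin d)) 0 :=
      (hasFDerivAt_const (0 : EuclideanSpace ℝ (Fin d))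
        (0 : ((fderiv ℝ ρ x).ker))).congr_of_eventuallyEq hev0
    have heq : A.comp ((fderiv ℝ ρ x).ker).subtypeL = 0 := hcomp.unique hzero
    have := DFunLike.congr_fun heq ⟨v, hvk⟩
    simpa using this
  -- divergence is continuous, hence vanishes on the closure of Ω
  have hDc : Continuous fun y => ∑ i, fderiv ℝ u y (EuclideanSpace.single i 1) i := by
    apply continuous_finset_sum
    intro i _
    have h1 : Continuous fun y => fderiv ℝ u y := hu.continuous_fderiv one_ne_zero
    exact (EuclideanSpace.proj i).continuous.comp
      ((ContinuousLinearMap.apply ℝ (EuclideanSpace ℝ (Fin d))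
        (EuclideanSpace.single i 1)).continuous.comp h1)
  have hD0 : ∑ i, A (EuclideanSpace.single i 1) i = 0 := by
    have heqon : Set.EqOn (fun y => ∑ i, fderiv ℝ u y (EuclideanSpace.single i 1) i)
        (fun _ => (0 : ℝ)) Ω := fun y hy => hdiv y hy
    have := heqon.closure hDc continuous_const (frontier_subset_closure hx)
    simpa [hAdef] using this
  -- express each column of A via A g
  have hAi : ∀ i, A (EuclideanSpace.single i 1) = ((g i) / ‖g‖ ^ 2) • A g := by
    intro i
    have hgi : (inner ℝ g (EuclideanSpace.single i 1) : ℝ) = g i := by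
      rw [real_inner_comm, EuclideanSpace.inner_single_left]
      simp
    have hgv : (inner ℝ g (EuclideanSpace.single i 1 - ((g i) / ‖g‖ ^ 2) • g) : ℝ) = 0 := by
      rw [inner_sub_right, inner_smul_right, real_inner_self_eq_norm_sq, hgi]
      field_simp
      ring
    have h := ht _ hgv
    rw [map_sub, map_smul, sub_eq_zero] at h
    exact h
  have hsum : ∑ i, A (EuclideanSpace.single i 1) i
      = (‖g‖ ^ 2)⁻¹ * (inner ℝ (A g) g : ℝ) := by
    have : (inner ℝ (A g) g : ℝ) = ∑ i, (A g) i * g i := by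
      rw [PiLp.inner_apply]
      simp [RCLike.inner_apply, mul_comm]
    rw [this, Finset.mul_sum]
    refine Finset.sum_congr rfl fun i _ => ?_
    rw [hAi i]
    simp [PiLp.smul_apply, smul_eq_mul, div_eq_inv_mul]
    ring
  have hAg : (inner ℝ (A g) g : ℝ) = 0 := by
    rw [hsum] at hD0
    have h2 : (‖g‖ ^ 2 : ℝ) ≠ 0 := pow_ne_zero 2 hgnorm
    field_simp at hD0
    simpa using hD0
  rw [map_smul, real_inner_smul_left, real_inner_smul_right, hAg]
  ring
end

section
/- Let ω > 0 satisfy tan(ω) = ω (equivalently ω cos ω = sin ω). Define ψ(r) = sin(ωr)/(ω²r³) − cos(ωr)/(ωr²) for r > 0. Then ∫₀¹ r⁴ ψ(r)² dr = (2cos²ω + ω² + ω cos ω sin ω − 2)/(2ω⁴). -/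
open Real Filter Set Topology MeasureTheory intervalIntegral

/-- The radial profile `ψ(r) = sin(ωr)/(ω²r³) − cos(ωr)/(ωr²)`. -/
noncomputable def psi (ω r : ℝ) : ℝ :=
  Real.sin (ω * r) / (ω ^ 2 * r ^ 3) - Real.cos (ω * r) / (ω * r ^ 2)

/-- For `ω > 0` with `tan ω = ω`,
`∫₀¹ r⁴ ψ(r)² dr = (2cos²ω + ω² + ω cos ω sin ω − 2)/(2ω⁴)`. -/
theorem integral_r4_psi_sq (ω : ℝ) (hω : 0 < ω) (htan : Real.tan ω = ω) :
    ∫ r in (0:ℝ)..1, r ^ 4 * (psi ω r) ^ 2 =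
      (2 * Real.cos ω ^ 2 + ω ^ 2 + ω * Real.cos ω * Real.sin ω - 2) / (2 * ω ^ 4) := by
  have hω0 : ω ≠ 0 := ne_of_gt hω
  set f : ℝ → ℝ := fun r => r ^ 4 * (psi ω r) ^ 2 with hfdef
  set F : ℝ → ℝ := fun r => r / (2 * ω ^ 2) + Real.sin (2 * (ω * r)) / (4 * ω ^ 3)
      - Real.sin (ω * r) ^ 2 / (ω ^ 4 * r) with hFdef
  -- the slope limit sin(ωr)/r → ω
  have hd : HasDerivAt (fun r : ℝ => Real.sin (ω * r)) ω 0 := by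
    have := (Real.hasDerivAt_sin (ω * 0)).comp 0 ((hasDerivAt_id (0:ℝ)).const_mul ω)
    simpa [Function.comp_def] using this
  have hS : Tendsto (fun r => Real.sin (ω * r) / r) (𝓝[≠] (0:ℝ)) (𝓝 ω) := by
    have h := hasDerivAt_iff_tendsto_slope.mp hd
    refine Filter.Tendsto.congr' ?_ h
    filter_upwards [self_mem_nhdsWithin] with r hr
    simp [slope_def_field]
  have hsin0 : Tendsto (fun r => Real.sin (ω * r)) (𝓝[≠] (0:ℝ)) (𝓝 0) := by
    have : Tendsto (fun r => Real.sin (ω * r)) (𝓝 (0:ℝ)) (𝓝 (Real.sin (ω * 0))) :=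
      (Real.continuous_sin.comp (continuous_const.mul continuous_id)).tendsto 0
    simpa using this.mono_left nhdsWithin_le_nhds
  have hcos1 : Tendsto (fun r => Real.cos (ω * r)) (𝓝[≠] (0:ℝ)) (𝓝 1) := by
    have : Tendsto (fun r => Real.cos (ω * r)) (𝓝 (0:ℝ)) (𝓝 (Real.cos (ω * 0))) :=
      (Real.continuous_cos.comp (continuous_const.mul continuous_id)).tendsto 0
    simpa using this.mono_left nhdsWithin_le_nhds
  -- continuity of f at 0
  have hf0 : ContinuousAt f 0 := by
    rw [← continuousWithinAt_compl_self]
    have h2 : Tendsto (fun r => ((Real.sin (ω * r) / r) / ω ^ 2 - Real.cos (ω * r) / ω) ^ 2)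
        (𝓝[≠] (0:ℝ)) (𝓝 ((ω / ω ^ 2 - 1 / ω) ^ 2)) :=
      ((hS.div_const (ω ^ 2)).sub (hcos1.div_const ω)).pow 2
    have hz : (ω / ω ^ 2 - 1 / ω : ℝ) ^ 2 = 0 := by field_simp; ring
    rw [hz] at h2
    have hfz : f 0 = 0 := by simp [hfdef, psi]
    unfold ContinuousWithinAt
    rw [hfz]
    refine Filter.Tendsto.congr' ?_ h2
    filter_upwards [self_mem_nhdsWithin] with r hr
    have hr0 : r ≠ 0 := hr
    simp only [hfdef, psi]
    field_simp
  -- continuity of F at 0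
  have hF0 : ContinuousAt F 0 := by
    rw [← continuousWithinAt_compl_self]
    have h1 : Tendsto (fun r : ℝ => r / (2 * ω ^ 2) + Real.sin (2 * (ω * r)) / (4 * ω ^ 3))
        (𝓝 (0:ℝ)) (𝓝 (0 / (2 * ω ^ 2) + Real.sin (2 * (ω * 0)) / (4 * ω ^ 3))) := by
      exact ((continuous_id.div_const _).add
        ((Real.continuous_sin.comp (continuous_const.mul (continuous_const.mul continuous_id))).div_const _)).tendsto 0
    have h1' : Tendsto (fun r : ℝ => r / (2 * ω ^ 2) + Real.sin (2 * (ω * r)) / (4 * ω ^ 3))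
        (𝓝[≠] (0:ℝ)) (𝓝 0) := by
      simpa using h1.mono_left nhdsWithin_le_nhds
    have h2 : Tendsto (fun r => (Real.sin (ω * r) / r) * Real.sin (ω * r) / ω ^ 4)
        (𝓝[≠] (0:ℝ)) (𝓝 (ω * 0 / ω ^ 4)) := (hS.mul hsin0).div_const _
    have h3 := h1'.sub h2
    have hFz : F 0 = 0 := by simp [hFdef]
    unfold ContinuousWithinAt
    rw [hFz]
    have : (0 : ℝ) - ω * 0 / ω ^ 4 = 0 := by ring
    rw [this] at h3
    refine Filter.Tendsto.congr' ?_ h3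
    filter_upwards [self_mem_nhdsWithin] with r hr
    have hr0 : r ≠ 0 := hr
    simp only [hFdef]
    field_simp
  -- continuity of f and F on intervals
  have hfc : ∀ r : ℝ, r ≠ 0 → ContinuousAt f r := by
    intro r hr0
    apply ContinuousAt.mul (by fun_prop)
    apply ContinuousAt.pow
    apply ContinuousAt.sub
    · exact ContinuousAt.div (by fun_prop) (by fun_prop) (by positivity)
    · exact ContinuousAt.div (by fun_prop) (by fun_prop) (by positivity)
  have hFc : ContinuousOn F (Icc (0:ℝ) 1) := by
    intro r hr
    rcases eq_or_ne r 0 with h | h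
    · exact (h ▸ hF0).continuousWithinAt
    · refine ContinuousAt.continuousWithinAt ?_
      apply ContinuousAt.sub (by fun_prop)
      exact ContinuousAt.div (by fun_prop) (by fun_prop) (by positivity)
  have hfint : IntervalIntegrable f volume 0 1 := by
    apply ContinuousOn.intervalIntegrable
    intro r hr
    rcases eq_or_ne r 0 with h | h
    · exact (h ▸ hf0).continuousWithinAt
    · exact (hfc r h).continuousWithinAt
  -- derivative
  have hderiv : ∀ r ∈ Ioo (0:ℝ) 1, HasDerivWithinAt F (f r) (Ioi r) r := by
    intro r hr
    have hr0 : r ≠ 0 := ne_of_gt hr.1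
    have hωr : HasDerivAt (fun x : ℝ => ω * x) ω r := by
      simpa using (hasDerivAt_id r).const_mul ω
    have h1 : HasDerivAt (fun x : ℝ => Real.sin (ω * x)) (Real.cos (ω * r) * ω) r :=
      (Real.hasDerivAt_sin (ω * r)).comp r hωr
    have h2 : HasDerivAt (fun x : ℝ => Real.sin (ω * x) ^ 2)
        (2 * Real.sin (ω * r) * (Real.cos (ω * r) * ω)) r := by
      simpa using h1.fun_pow 2
    have hden : HasDerivAt (fun x : ℝ => ω ^ 4 * x) (ω ^ 4) r := by
      simpa using (hasDerivAt_id r).const_mul (ω ^ 4)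
    have hdenne : ω ^ 4 * r ≠ 0 := by positivity
    have h3 := h2.div hden hdenne
    have h4 : HasDerivAt (fun x : ℝ => Real.sin (2 * (ω * x)) / (4 * ω ^ 3))
        (Real.cos (2 * (ω * r)) * (2 * ω) / (4 * ω ^ 3)) r := by
      have hlin : HasDerivAt (fun x : ℝ => 2 * (ω * x)) (2 * ω) r := by
        have := (hasDerivAt_id r).const_mul (2 * ω)
        simpa [mul_assoc] using this
      exact ((Real.hasDerivAt_sin (2 * (ω * r))).comp r hlin).div_const _
    have h5 : HasDerivAt (fun x : ℝ => x / (2 * ω ^ 2)) (1 / (2 * ω ^ 2)) r :=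
      (hasDerivAt_id r).div_const _
    have hF' := (h5.add h4).sub h3
    have heq : 1 / (2 * ω ^ 2) + Real.cos (2 * (ω * r)) * (2 * ω) / (4 * ω ^ 3) -
        (2 * Real.sin (ω * r) * (Real.cos (ω * r) * ω) * (ω ^ 4 * r) -
          Real.sin (ω * r) ^ 2 * ω ^ 4) / (ω ^ 4 * r) ^ 2 = f r := by
      rw [Real.cos_two_mul]
      simp only [hfdef, psi]
      field_simp
      ring
    rw [heq] at hF'
    exact hF'.hasDerivWithinAt
  rw [integral_eq_sub_of_hasDeriv_right_of_le zero_le_one hFc hderiv hfint]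
  have hF1 : F 1 = 1 / (2 * ω ^ 2) + Real.sin (2 * ω) / (4 * ω ^ 3) - Real.sin ω ^ 2 / ω ^ 4 := by
    simp [hFdef]
  have hF0' : F 0 = 0 := by simp [hFdef]
  rw [hF1, hF0', Real.sin_two_mul]
  have hpyth := Real.sin_sq_add_cos_sq ω
  field_simp
  linear_combination (-8 : ℝ) * hpyth
end
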